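/- arXiv:1206.1935 — 5 statements merged into one kernel-verified Lean document; each statement's English description precedes it below -/
import Mathlib

section
/- Let E be a super-operator on ℂ^d and let ρ, σ be positive semidefinite d×d complex matrices. If supp(ρ) ⊆ supp(σ) then supp(E(ρ)) ⊆ supp(E(σ)); consequently, if supp(ρ) = supp(σ) then supp(E(ρ)) = supp(E(σ)). -/
/-!
For Hermitian matrices the range is the orthogonal complement of the kernel, so an inclusion of
supports is the reverse inclusion of kernels. For `ρ ⪰ 0` the kernel of `E(ρ) = ∑ Eᵢ ρ Eᵢᴴ` is
`{x | ∀ i, Eᵢᴴ x ∈ ker ρ}`: the quadratic form `x* E(ρ) x = ∑ (Eᵢᴴ x)* ρ (Eᵢᴴ x)` is a sum of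
nonnegative terms, and `y* ρ y = 0` forces `ρ y = 0`. This description is monotone in `ker ρ`.
-/

open Matrix
open scoped ComplexOrder

/-- The support of a matrix `ρ`, i.e. the range (column space) of `ρ`. -/
noncomputable def matSupp {d : ℕ} (ρ : Matrix (Fin d) (Fin d) ℂ) :
    Submodule ℂ (Fin d → ℂ) :=
  LinearMap.range ρ.mulVecLin

/-- The super-operator with Kraus operators `E i`, applied to `ρ`:
`E(ρ) = ∑ i, E i * ρ * (E i)ᴴ`. -/
noncomputable def superApply {d n : ℕ} (E : Fin n → Matrix (Fin d) (Fin d) ℂ)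
    (ρ : Matrix (Fin d) (Fin d) ℂ) : Matrix (Fin d) (Fin d) ℂ :=
  ∑ i, E i * ρ * (E i)ᴴ

namespace Matrix

variable {n 𝕜 : Type*} [Fintype n] [RCLike 𝕜]

theorem range_mulVecLin_eq_map_range_toEuclideanLin [DecidableEq n] (A : Matrix n n 𝕜) :
    LinearMap.range A.mulVecLin =
      (LinearMap.range A.toEuclideanLin).map (WithLp.linearEquiv 2 𝕜 (n → 𝕜)).toLinearMap := by
  ext x
  constructor
  · rintro ⟨y, rfl⟩
    exact ⟨_, ⟨WithLp.toLp 2 y, rfl⟩, rfl⟩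
  · rintro ⟨_, ⟨y, rfl⟩, rfl⟩
    exact ⟨y.ofLp, rfl⟩

theorem ker_mulVecLin_eq_map_ker_toEuclideanLin [DecidableEq n] (A : Matrix n n 𝕜) :
    LinearMap.ker A.mulVecLin =
      (LinearMap.ker A.toEuclideanLin).map (WithLp.linearEquiv 2 𝕜 (n → 𝕜)).toLinearMap := by
  ext x
  constructor
  · intro hx
    exact ⟨WithLp.toLp 2 x, by simpa [toLpLin_apply] using hx, rfl⟩
  · rintro ⟨y, hy, rfl⟩
    simpa [toLpLin_apply] using hy

theorem IsHermitian.range_mulVecLin_le_iff [DecidableEq n] {A B : Matrix n n 𝕜}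
    (hA : A.IsHermitian) (hB : B.IsHermitian) :
    LinearMap.range A.mulVecLin ≤ LinearMap.range B.mulVecLin ↔
      LinearMap.ker B.mulVecLin ≤ LinearMap.ker A.mulVecLin := by
  rw [range_mulVecLin_eq_map_range_toEuclideanLin, range_mulVecLin_eq_map_range_toEuclideanLin,
    ker_mulVecLin_eq_map_ker_toEuclideanLin, ker_mulVecLin_eq_map_ker_toEuclideanLin,
    Submodule.map_le_map_iff_of_injective (LinearEquiv.injective _),
    Submodule.map_le_map_iff_of_injective (LinearEquiv.injective _),
    ← (isSymmetric_toEuclideanLin_iff.mpr hA).orthogonal_range,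
    ← (isSymmetric_toEuclideanLin_iff.mpr hB).orthogonal_range,
    Submodule.orthogonal_le_orthogonal_iff]

theorem PosSemidef.ker_mulVecLin_mul_mul_conjTranspose {m : Type*} [Fintype m]
    {A : Matrix n n 𝕜} (hA : A.PosSemidef) (M : Matrix m n 𝕜) :
    LinearMap.ker (M * A * Mᴴ).mulVecLin = (LinearMap.ker A.mulVecLin).comap Mᴴ.mulVecLin := by
  ext x
  simp only [LinearMap.mem_ker, Submodule.mem_comap, mulVecLin_apply]
  rw [← (hA.mul_mul_conjTranspose_same M).dotProduct_mulVec_zero_iff,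
    ← hA.dotProduct_mulVec_zero_iff, ← mulVec_mulVec, ← mulVec_mulVec, dotProduct_mulVec,
    star_mulVec, conjTranspose_conjTranspose]

theorem ker_mulVecLin_sum_of_posSemidef {ι : Type*} (s : Finset ι) {A : ι → Matrix n n 𝕜}
    (hA : ∀ i ∈ s, (A i).PosSemidef) :
    LinearMap.ker (∑ i ∈ s, A i).mulVecLin = ⨅ i ∈ s, LinearMap.ker (A i).mulVecLin := by
  ext x
  simp only [LinearMap.mem_ker, Submodule.mem_iInf, mulVecLin_apply]
  rw [← (posSemidef_sum s hA).dotProduct_mulVec_zero_iff, sum_mulVec, dotProduct_sum,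
    Finset.sum_eq_zero_iff_of_nonneg fun i hi => (hA i hi).dotProduct_mulVec_nonneg x]
  exact forall₂_congr fun i hi => (hA i hi).dotProduct_mulVec_zero_iff x

end Matrix

theorem superApply_posSemidef {d n : ℕ} (E : Fin n → Matrix (Fin d) (Fin d) ℂ)
    {ρ : Matrix (Fin d) (Fin d) ℂ} (hρ : ρ.PosSemidef) : (superApply E ρ).PosSemidef :=
  posSemidef_sum _ fun i _ => hρ.mul_mul_conjTranspose_same (E i)

theorem ker_mulVecLin_superApply {d n : ℕ} (E : Fin n → Matrix (Fin d) (Fin d) ℂ)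
    {ρ : Matrix (Fin d) (Fin d) ℂ} (hρ : ρ.PosSemidef) :
    LinearMap.ker (superApply E ρ).mulVecLin =
      ⨅ i, (LinearMap.ker ρ.mulVecLin).comap (E i)ᴴ.mulVecLin := by
  rw [superApply, ker_mulVecLin_sum_of_posSemidef _ fun i _ => hρ.mul_mul_conjTranspose_same (E i)]
  simp only [hρ.ker_mulVecLin_mul_mul_conjTranspose, Finset.mem_univ, iInf_pos]

theorem matSupp_superApply_le_of_le {d n : ℕ} (E : Fin n → Matrix (Fin d) (Fin d) ℂ)
    {ρ σ : Matrix (Fin d) (Fin d) ℂ} (hρ : ρ.PosSemidef) (hσ : σ.PosSemidef)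
    (h : matSupp ρ ≤ matSupp σ) : matSupp (superApply E ρ) ≤ matSupp (superApply E σ) := by
  rw [matSupp, matSupp, hρ.isHermitian.range_mulVecLin_le_iff hσ.isHermitian] at h
  rw [matSupp, matSupp,
    (superApply_posSemidef E hρ).isHermitian.range_mulVecLin_le_iff
      (superApply_posSemidef E hσ).isHermitian,
    ker_mulVecLin_superApply E hρ, ker_mulVecLin_superApply E hσ]
  exact iInf_mono fun i => Submodule.comap_mono h

theorem supp_superApply_mono_general {d n : ℕ} (E : Fin n → Matrix (Fin d) (Fin d) ℂ)
    (ρ σ : Matrix (Fin d) (Fin d) ℂ) (hρ : ρ.PosSemidef) (hσ : σ.PosSemidef) :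
    (matSupp ρ ≤ matSupp σ → matSupp (superApply E ρ) ≤ matSupp (superApply E σ)) ∧
    (matSupp ρ = matSupp σ → matSupp (superApply E ρ) = matSupp (superApply E σ)) :=
  ⟨matSupp_superApply_le_of_le E hρ hσ, fun h =>
    (matSupp_superApply_le_of_le E hρ hσ h.le).antisymm (matSupp_superApply_le_of_le E hσ hρ h.ge)⟩

theorem supp_superApply_mono {d n : ℕ} (E : Fin n → Matrix (Fin d) (Fin d) ℂ)
    (hE : (1 - ∑ i, (E i)ᴴ * E i).PosSemidef)
    (ρ σ : Matrix (Fin d) (Fin d) ℂ) (hρ : ρ.PosSemidef) (hσ : σ.PosSemidef) :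
    (matSupp ρ ≤ matSupp σ → matSupp (superApply E ρ) ≤ matSupp (superApply E σ)) ∧
    (matSupp ρ = matSupp σ → matSupp (superApply E ρ) = matSupp (superApply E σ)) :=
  supp_superApply_mono_general E ρ σ hρ hσ
end

section
/- Let E be a super-operator on ℂ^d with Kraus representation E = ∑_i E_i · E_i†, and let X be a subspace of ℂ^d. Then the pre-image of X under E satisfies E^{-1}(X) = (supp(E*(P_{X^⊥})))^⊥, where E* = ∑_i E_i† · E_i is the Schrödinger–Heisenberg dual of E, X^⊥ is the orthogonal complement of X, and P_{X^⊥} is the orthogonal projection onto X^⊥. -/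
open Matrix
open scoped ComplexOrder

/-- The support of a matrix `ρ`, i.e. the range (column space) of `ρ`,
as a subspace of the euclidean space `ℂ^d`. -/
noncomputable def esupp {d : ℕ} (ρ : Matrix (Fin d) (Fin d) ℂ) :
    Submodule ℂ (EuclideanSpace ℂ (Fin d)) :=
  LinearMap.range (Matrix.toEuclideanLin ρ)

/-- The rank-one matrix `|ψ⟩⟨ψ|` associated with a vector `ψ`. -/
def rankOne {d : ℕ} (ψ : EuclideanSpace ℂ (Fin d)) : Matrix (Fin d) (Fin d) ℂ :=
  Matrix.of fun i j => ψ i * star (ψ j)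

/-- The (Schrödinger–Heisenberg) dual super-operator: `E*(ρ) = ∑ i, (E i)ᴴ * ρ * E i`. -/
noncomputable def superApplyDual {d n : ℕ} (E : Fin n → Matrix (Fin d) (Fin d) ℂ)
    (ρ : Matrix (Fin d) (Fin d) ℂ) : Matrix (Fin d) (Fin d) ℂ :=
  ∑ i, (E i)ᴴ * ρ * E i

/-!
Both sides equal `{ψ | ∀ i, E i ψ ∈ X}`. For finitely many operators `A i`, the range of
`∑ A i A i†` is `⨆ range (A i)` and the kernel of `∑ A i† A i` is `⨅ ker (A i)`, because
`⟪x, ∑ A i† A i x⟫ = ∑ ‖A i x‖²`. Now `E(|ψ⟩⟨ψ|) = ∑ |E i ψ⟩⟨E i ψ|` has the first shape, and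
`Q = Q† Q` gives `E*(Q) = ∑ (Q E i)† (Q E i)`, which has the second, with `ker Q = X`.
-/

open scoped InnerProductSpace

namespace LinearMap

variable {𝕜 E F ι : Type*} [RCLike 𝕜] [Fintype ι]
  [NormedAddCommGroup E] [InnerProductSpace 𝕜 E] [FiniteDimensional 𝕜 E]
  [NormedAddCommGroup F] [InnerProductSpace 𝕜 F] [FiniteDimensional 𝕜 F]

theorem ker_sum_adjoint_comp_self (A : ι → E →ₗ[𝕜] F) :
    ker (∑ i, (A i).adjoint ∘ₗ A i) = ⨅ i, ker (A i) := by
  ext x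
  simp only [mem_ker, Submodule.mem_iInf]
  refine ⟨fun h i => ?_, fun h => by simp [h]⟩
  have hsum : ∑ i, ‖A i x‖ ^ 2 = 0 := by
    simpa [sum_apply, inner_sum, adjoint_inner_right, inner_self_eq_norm_sq]
      using congrArg (fun y => RCLike.re ⟪x, y⟫_𝕜) h
  simpa using (Finset.sum_eq_zero_iff_of_nonneg fun i _ => sq_nonneg ‖A i x‖).mp hsum i
    (Finset.mem_univ i)

theorem range_sum_comp_adjoint (A : ι → F →ₗ[𝕜] E) :
    range (∑ i, A i ∘ₗ (A i).adjoint) = ⨆ i, range (A i) := by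
  have hself : (∑ i, A i ∘ₗ (A i).adjoint).adjoint = ∑ i, A i ∘ₗ (A i).adjoint := by
    simp [adjoint_comp]
  have hker := ker_sum_adjoint_comp_self fun i => (A i).adjoint
  simp only [adjoint_adjoint, ← orthogonal_range] at hker
  rw [← hself, ← orthogonal_ker, hker, Submodule.iInf_orthogonal, Submodule.orthogonal_orthogonal]

end LinearMap

open LinearMap

theorem Matrix.toEuclideanLin_mul {𝕜 l m n : Type*} [RCLike 𝕜] [Fintype m] [DecidableEq m]
    [Fintype n] [DecidableEq n] (A : Matrix l m 𝕜) (B : Matrix m n 𝕜) :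
    toEuclideanLin (A * B) = toEuclideanLin A ∘ₗ toEuclideanLin B := by
  ext v : 1
  simp [Matrix.toLpLin_apply, Matrix.mulVec_mulVec]

section

variable {d : ℕ}

theorem toEuclideanLin_rankOne (ψ : EuclideanSpace ℂ (Fin d)) :
    toEuclideanLin (rankOne ψ) = toSpanSingleton ℂ _ ψ ∘ₗ (toSpanSingleton ℂ _ ψ).adjoint := by
  ext v : 1
  rw [adjoint_toSpanSingleton]
  ext j
  simp [rankOne, Matrix.toLpLin_apply, Matrix.mulVec, dotProduct, PiLp.inner_apply, mul_comm,
    mul_left_comm]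

theorem esupp_superApply_rankOne {n : ℕ} (E : Fin n → Matrix (Fin d) (Fin d) ℂ)
    (ψ : EuclideanSpace ℂ (Fin d)) :
    esupp (superApply E (rankOne ψ)) = ⨆ i, ℂ ∙ toEuclideanLin (E i) ψ := by
  have hcomp : ∀ i, toSpanSingleton ℂ _ (toEuclideanLin (E i) ψ)
      = toEuclideanLin (E i) ∘ₗ toSpanSingleton ℂ _ ψ := fun i => by ext; simp
  simp_rw [← range_toSpanSingleton, hcomp, ← range_sum_comp_adjoint, esupp, superApply, map_sum,
    Matrix.toEuclideanLin_mul, toEuclideanLin_rankOne, adjoint_comp,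
    Matrix.toEuclideanLin_conjTranspose_eq_adjoint, comp_assoc]

theorem Matrix.ker_toEuclideanLin_sum_conjTranspose_mul_self {𝕜 ι m n : Type*} [RCLike 𝕜]
    [Fintype ι] [Fintype m] [DecidableEq m] [Fintype n] [DecidableEq n] (B : ι → Matrix m n 𝕜) :
    ker (toEuclideanLin (∑ i, (B i)ᴴ * B i)) = ⨅ i, ker (toEuclideanLin (B i)) := by
  simp_rw [map_sum, Matrix.toEuclideanLin_mul, Matrix.toEuclideanLin_conjTranspose_eq_adjoint,
    ker_sum_adjoint_comp_self]

theorem orthogonal_esupp {ρ : Matrix (Fin d) (Fin d) ℂ} (hρ : ρ.IsHermitian) :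
    (esupp ρ)ᗮ = ker (toEuclideanLin ρ) := by
  rw [esupp, orthogonal_range, ← Matrix.toEuclideanLin_conjTranspose_eq_adjoint, hρ.eq]

theorem superApplyDual_eq_sum_conjTranspose_mul_self {n : ℕ} (E : Fin n → Matrix (Fin d) (Fin d) ℂ)
    {Q : Matrix (Fin d) (Fin d) ℂ} (hQ : Q.IsHermitian) (hQ2 : Q * Q = Q) :
    superApplyDual E Q = ∑ i, (Q * E i)ᴴ * (Q * E i) := by
  refine Finset.sum_congr rfl fun i _ => ?_
  rw [Matrix.conjTranspose_mul, hQ.eq, Matrix.mul_assoc, Matrix.mul_assoc, ← Matrix.mul_assoc Q Q,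
    hQ2]

end

theorem preimage_eq_orthogonal_supp_dual_general {d n : ℕ}
    (E : Fin n → Matrix (Fin d) (Fin d) ℂ)
    (X : Submodule ℂ (EuclideanSpace ℂ (Fin d)))
    (Q : Matrix (Fin d) (Fin d) ℂ)
    (hQ : Q.IsHermitian) (hQ2 : Q * Q = Q) (hQX : esupp Q = Xᗮ) :
    {ψ : EuclideanSpace ℂ (Fin d) | esupp (superApply E (rankOne ψ)) ≤ X}
      = (↑((esupp (superApplyDual E Q))ᗮ) : Set (EuclideanSpace ℂ (Fin d))) := by
  have hX : X = ker (toEuclideanLin Q) := by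
    rw [← orthogonal_esupp hQ, hQX, Submodule.orthogonal_orthogonal]
  have hdual := superApplyDual_eq_sum_conjTranspose_mul_self E hQ hQ2
  have hherm : (superApplyDual E Q).IsHermitian := by
    rw [hdual]; exact isSelfAdjoint_sum _ fun i _ => Matrix.isHermitian_conjTranspose_mul_self _
  ext ψ
  rw [Set.mem_ofPred_eq, SetLike.mem_coe, esupp_superApply_rankOne, orthogonal_esupp hherm, hdual,
    Matrix.ker_toEuclideanLin_sum_conjTranspose_mul_self]
  simp only [iSup_le_iff, Submodule.span_singleton_le_iff_mem, Submodule.mem_iInf, mem_ker,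
    Matrix.toEuclideanLin_mul, LinearMap.comp_apply, hX]

theorem preimage_eq_orthogonal_supp_dual {d n : ℕ}
    (E : Fin n → Matrix (Fin d) (Fin d) ℂ)
    (hE : (1 - ∑ i, (E i)ᴴ * E i).PosSemidef)
    (X : Submodule ℂ (EuclideanSpace ℂ (Fin d)))
    (Q : Matrix (Fin d) (Fin d) ℂ)
    (hQ : Q.IsHermitian) (hQ2 : Q * Q = Q) (hQX : esupp Q = Xᗮ) :
    {ψ : EuclideanSpace ℂ (Fin d) | esupp (superApply E (rankOne ψ)) ≤ X}
      = (↑((esupp (superApplyDual E Q))ᗮ) : Set (EuclideanSpace ℂ (Fin d))) :=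
  preimage_eq_orthogonal_supp_dual_general E X Q hQ hQ2 hQX
end

section
/- Let {E_i} be a finite family of d×d complex matrices with ∑_i E_i† E_i ≤ I in the Loewner order, and let M = ∑_i E_i ⊗ E_i* be the d²×d² matrix representation of the super-operator E = ∑_i E_i · E_i† (Kronecker product, with E_i* the entrywise complex conjugate of E_i). Then every eigenvalue λ ∈ ℂ of M satisfies |λ| ≤ 1. -/
open Matrix
open scoped ComplexOrder Kronecker

/-!
The matrices `∑ i, E i ⊗ₖ conj (E i)` with `∑ i, (E i)ᴴ * E i ≤ 1` form a monoid: composing two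
super-operators multiplies their Kraus operators pairwise. Every entry of such a matrix has modulus
at most `1`, by AM-GM and the bound `∑ i, ‖E i a c‖ ^ 2 ≤ ((∑ i, (E i)ᴴ * E i) c c) ≤ 1`. Hence all
powers of `M` are entrywise bounded by `1`, and if `M v = λ v` with `v p ≠ 0` then
`‖λ‖ ^ k * ‖v p‖ = ‖(M ^ k v) p‖ ≤ ∑ q, ‖v q‖` for every `k`, which forces `‖λ‖ ≤ 1`.
-/

theorem Matrix.pow_mulVec_of_mulVec_eq_smul {n R : Type*} [Fintype n] [DecidableEq n]
    [CommSemiring R] {M : Matrix n n R} {lam : R} {v : n → R} (hev : M *ᵥ v = lam • v) (k : ℕ) :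
    (M ^ k) *ᵥ v = lam ^ k • v := by
  induction k with
  | zero => simp
  | succ k ih => rw [pow_succ', ← mulVec_mulVec, ih, mulVec_smul, hev, smul_smul, pow_succ]

theorem le_one_of_forall_pow_mul_le {a c B : ℝ} (hc : 0 < c) (h : ∀ k : ℕ, a ^ k * c ≤ B) :
    a ≤ 1 := by
  by_contra! ha
  obtain ⟨k, hk⟩ := pow_unbounded_of_one_lt (B / c) ha
  exact (h k).not_gt ((div_lt_iff₀ hc).mp hk)

theorem Matrix.norm_le_one_of_mulVec_eq_smul_of_pow_apply_le {n 𝕜 : Type*} [Fintype n]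
    [DecidableEq n] [NormedField 𝕜] {M : Matrix n n 𝕜} {C : ℝ}
    (hbound : ∀ k p q, ‖(M ^ k) p q‖ ≤ C) {lam : 𝕜} {v : n → 𝕜} (hv : v ≠ 0)
    (hev : M *ᵥ v = lam • v) : ‖lam‖ ≤ 1 := by
  obtain ⟨p, hp⟩ := Function.ne_iff.mp hv
  refine le_one_of_forall_pow_mul_le (B := C * ∑ q, ‖v q‖) (norm_pos_iff.mpr hp) fun k => ?_
  calc ‖lam‖ ^ k * ‖v p‖ = ‖((M ^ k) *ᵥ v) p‖ := by
        simp [pow_mulVec_of_mulVec_eq_smul hev k]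
    _ ≤ ∑ q, ‖(M ^ k) p q‖ * ‖v q‖ := by
        simpa only [mulVec, dotProduct, norm_mul] using
          norm_sum_le Finset.univ fun q => (M ^ k) p q * v q
    _ ≤ ∑ q, C * ‖v q‖ := by gcongr with q; exact hbound k p q
    _ = C * ∑ q, ‖v q‖ := (Finset.mul_sum ..).symm

section Kraus

variable {m : Type*} [Fintype m] [DecidableEq m]

/-- The Kraus family is indexed by an arbitrary finite type, so that a composite can be indexed by
the product of the two index types. -/
def IsSubunitalKrausRep (M : Matrix (m × m) (m × m) ℂ) : Prop :=
  ∃ (ι : Type) (_ : Fintype ι) (E : ι → Matrix m m ℂ),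
    (1 - ∑ i, (E i)ᴴ * E i).PosSemidef ∧ M = ∑ i, E i ⊗ₖ (E i).map star

theorem isSubunitalKrausRep_one : IsSubunitalKrausRep (1 : Matrix (m × m) (m × m) ℂ) :=
  ⟨Unit, inferInstance, fun _ => 1, by simpa using PosSemidef.zero, by simp⟩

theorem IsSubunitalKrausRep.mul {M N : Matrix (m × m) (m × m) ℂ} (hM : IsSubunitalKrausRep M)
    (hN : IsSubunitalKrausRep N) : IsSubunitalKrausRep (M * N) := by
  obtain ⟨ι, _, A, hA, rfl⟩ := hM
  obtain ⟨κ, _, B, hB, rfl⟩ := hN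
  refine ⟨ι × κ, inferInstance, fun p => A p.1 * B p.2, ?_, ?_⟩
  · have hsplit : 1 - ∑ p : ι × κ, (A p.1 * B p.2)ᴴ * (A p.1 * B p.2) =
        (1 - ∑ j, (B j)ᴴ * B j) + ∑ j, (B j)ᴴ * (1 - ∑ i, (A i)ᴴ * A i) * B j := by
      simp only [Fintype.sum_prod_type_right, conjTranspose_mul, mul_sub, sub_mul, mul_one,
        Finset.mul_sum, Finset.sum_mul, Finset.sum_sub_distrib, mul_assoc]
      abel
    rw [hsplit]
    exact hB.add (posSemidef_sum _ fun j _ => hA.conjTranspose_mul_mul_same (B j))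
  · have map_star_mul (X Y : Matrix m m ℂ) : (X * Y).map star = X.map star * Y.map star :=
      Matrix.map_mul (f := starRingEnd ℂ)
    simp only [Finset.sum_mul_sum, Fintype.sum_prod_type, map_star_mul, mul_kronecker_mul]

theorem IsSubunitalKrausRep.pow {M : Matrix (m × m) (m × m) ℂ} (hM : IsSubunitalKrausRep M)
    (k : ℕ) : IsSubunitalKrausRep (M ^ k) := by
  induction k with
  | zero => simpa using isSubunitalKrausRep_one
  | succ k ih => simpa [pow_succ] using ih.mul hM

theorem sum_norm_sq_apply_le_one {ι : Type*} [Fintype ι] {E : ι → Matrix m m ℂ}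
    (hE : (1 - ∑ i, (E i)ᴴ * E i).PosSemidef) (a c : m) : ∑ i, ‖E i a c‖ ^ 2 ≤ 1 := by
  have hdiag : (∑ i, (E i)ᴴ * E i) c c = ((∑ i, ∑ b, ‖E i b c‖ ^ 2 : ℝ) : ℂ) := by
    simp [Matrix.sum_apply, mul_apply, Complex.conj_mul']
  have hcol : ∑ i, ∑ b, ‖E i b c‖ ^ 2 ≤ 1 := by
    have := hE.diag_nonneg (i := c)
    rw [Matrix.sub_apply, sub_nonneg, hdiag, one_apply_eq] at this
    exact_mod_cast this
  refine le_trans ?_ hcol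
  gcongr with i
  exact Finset.single_le_sum (f := fun b => ‖E i b c‖ ^ 2) (fun _ _ => sq_nonneg _)
    (Finset.mem_univ a)

theorem IsSubunitalKrausRep.norm_apply_le_one {M : Matrix (m × m) (m × m) ℂ}
    (hM : IsSubunitalKrausRep M) (p q : m × m) : ‖M p q‖ ≤ 1 := by
  obtain ⟨ι, _, E, hE, rfl⟩ := hM
  obtain ⟨a, b⟩ := p
  obtain ⟨c, e⟩ := q
  calc ‖(∑ i, E i ⊗ₖ (E i).map star) (a, b) (c, e)‖
      ≤ ∑ i, ‖E i a c‖ * ‖E i b e‖ := by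
        simpa [Matrix.sum_apply, kroneckerMap_apply] using
          norm_sum_le Finset.univ fun i => E i a c * star (E i b e)
    _ ≤ ∑ i, (‖E i a c‖ ^ 2 + ‖E i b e‖ ^ 2) / 2 := by
        gcongr with i; linarith [two_mul_le_add_sq ‖E i a c‖ ‖E i b e‖]
    _ ≤ (1 + 1) / 2 := by
        rw [← Finset.sum_div, Finset.sum_add_distrib]
        gcongr <;> exact sum_norm_sq_apply_le_one hE _ _
    _ = 1 := by norm_num

end Kraus

theorem eigenvalue_matrixRep_le_one {d n : ℕ}
    (E : Fin n → Matrix (Fin d) (Fin d) ℂ)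
    (hE : (1 - ∑ i, (E i)ᴴ * E i).PosSemidef)
    (M : Matrix (Fin d × Fin d) (Fin d × Fin d) ℂ)
    (hM : M = ∑ i, (E i) ⊗ₖ ((E i).map star))
    (lam : ℂ) (v : Fin d × Fin d → ℂ) (hv : v ≠ 0)
    (hev : M.mulVec v = lam • v) :
    ‖lam‖ ≤ 1 := by
  have hM' : IsSubunitalKrausRep M := ⟨Fin n, inferInstance, E, hE, hM⟩
  exact norm_le_one_of_mulVec_eq_smul_of_pow_apply_le (fun k => (hM'.pow k).norm_apply_le_one) hv hev
end

section
/- Let P = ({E_k : k ∈ K}, {M_0, M_1}) be a concurrent quantum program on ℂ^d with input a partial density operator ρ_0, and let F = ∑_{k∈K} F_k. Then the reachable space satisfies H_R = ⋁_{f ∈ K*} supp(F_f(ρ_0)) = supp(∑_{i=0}^{d−1} F^i(ρ_0)), where F^i denotes the i-fold composition of F. -/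
open Matrix
open scoped ComplexOrder

/-- The super-operator `F_k(ρ) = E_k(M₁ ρ M₁ᴴ)` of process `k`, where the
super-operator `E_k` has Kraus operators `E k i`. -/
noncomputable def progF {d m n : ℕ} (E : Fin m → Fin n → Matrix (Fin d) (Fin d) ℂ)
    (M₁ : Matrix (Fin d) (Fin d) ℂ) (k : Fin m)
    (ρ : Matrix (Fin d) (Fin d) ℂ) : Matrix (Fin d) (Fin d) ℂ :=
  ∑ i, E k i * (M₁ * ρ * M₁ᴴ) * (E k i)ᴴ

/-- For a finite string `f = s₁s₂⋯sₙ`, the super-operator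
`F_f = F_{sₙ} ∘ ⋯ ∘ F_{s₂} ∘ F_{s₁}` (the identity for the empty string). -/
noncomputable def progFStr {d m n : ℕ} (E : Fin m → Fin n → Matrix (Fin d) (Fin d) ℂ)
    (M₁ : Matrix (Fin d) (Fin d) ℂ) :
    List (Fin m) → Matrix (Fin d) (Fin d) ℂ → Matrix (Fin d) (Fin d) ℂ
  | [], ρ => ρ
  | k :: f, ρ => progFStr E M₁ f (progF E M₁ k ρ)

/-!
For positive semidefinite `ρ` we have `supp (K ρ Kᴴ) = K (supp ρ)` and
`supp (A + B) = supp A ⊔ supp B`: every positive semidefinite matrix is a Gram matrix `B Bᴴ`,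
and `range (B Bᴴ) = range B`. Hence `supp (F σ)` depends only on `supp σ`, through the
monotone map `Ψ = progFSupp` on subspaces, and the partial sums `T_N = supp (∑_{i<N} F^i ρ₀)`
are the iterates `T_{N+1} = supp ρ₀ ⊔ Ψ T_N` starting from `⊥`. Such an increasing chain in
`ℂ^d` becomes stationary after at most `d` steps, so `T_d` contains every `supp (F^i ρ₀)`.
Expanding `F^i ρ₀` as the sum of the `F_f ρ₀` over strings `f` of length `i` identifies
`⨆ i, supp (F^i ρ₀)` with the reachable space.
-/

namespace Matrix

variable {𝕜 : Type*} [RCLike 𝕜] {l m n : Type*} [Fintype m] [Fintype n]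

theorem range_mulVecLin_fromCols (A₁ : Matrix l m 𝕜) (A₂ : Matrix l n 𝕜) :
    LinearMap.range (fromCols A₁ A₂).mulVecLin
      = LinearMap.range A₁.mulVecLin ⊔ LinearMap.range A₂.mulVecLin := by
  have hcol : (fromCols A₁ A₂).col = Sum.elim A₁.col A₂.col := by
    funext j; cases j <;> rfl
  rw [range_mulVecLin, range_mulVecLin, range_mulVecLin, hcol, Set.Sum.elim_range,
    Submodule.span_union]

theorem range_mulVecLin_mul_conjTranspose_self (A : Matrix m n 𝕜) :
    LinearMap.range (A * Aᴴ).mulVecLin = LinearMap.range A.mulVecLin :=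
  Submodule.eq_of_le_of_finrank_eq
    (by rw [mulVecLin_mul, LinearMap.range_comp]; exact LinearMap.map_le_range)
    (rank_self_mul_conjTranspose A)

open scoped MatrixOrder in
theorem PosSemidef.exists_eq_mul_conjTranspose_self {ρ : Matrix n n 𝕜}
    (hρ : ρ.PosSemidef) : ∃ B : Matrix n n 𝕜, ρ = B * Bᴴ := by
  classical
  obtain ⟨B, rfl⟩ := CStarAlgebra.nonneg_iff_eq_star_mul_self.mp hρ.nonneg
  exact ⟨Bᴴ, by rw [conjTranspose_conjTranspose]; rfl⟩

theorem PosSemidef.range_mulVecLin_add {A B : Matrix n n 𝕜} (hA : A.PosSemidef)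
    (hB : B.PosSemidef) :
    LinearMap.range (A + B).mulVecLin
      = LinearMap.range A.mulVecLin ⊔ LinearMap.range B.mulVecLin := by
  obtain ⟨X, rfl⟩ := hA.exists_eq_mul_conjTranspose_self
  obtain ⟨Y, rfl⟩ := hB.exists_eq_mul_conjTranspose_self
  rw [← fromCols_mul_fromRows, ← conjTranspose_fromCols_eq_fromRows_conjTranspose,
    range_mulVecLin_mul_conjTranspose_self, range_mulVecLin_mul_conjTranspose_self,
    range_mulVecLin_mul_conjTranspose_self, range_mulVecLin_fromCols]

theorem PosSemidef.range_mulVecLin_sum {ι : Type*} (s : Finset ι) {ρ : ι → Matrix n n 𝕜}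
    (hρ : ∀ i ∈ s, (ρ i).PosSemidef) :
    LinearMap.range (∑ i ∈ s, ρ i).mulVecLin
      = ⨆ i ∈ s, LinearMap.range (ρ i).mulVecLin := by
  classical
  induction s using Finset.induction with
  | empty => simp
  | insert a s ha ih =>
    rw [Finset.sum_insert ha, Finset.iSup_insert, (hρ a (by simp)).range_mulVecLin_add
      (posSemidef_sum s fun i hi => hρ i (by simp [hi])), ih fun i hi => hρ i (by simp [hi])]

theorem PosSemidef.range_mulVecLin_mul_mul_conjTranspose {ρ : Matrix n n 𝕜}
    (hρ : ρ.PosSemidef) (K : Matrix m n 𝕜) :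
    LinearMap.range (K * ρ * Kᴴ).mulVecLin = (LinearMap.range ρ.mulVecLin).map K.mulVecLin := by
  obtain ⟨B, rfl⟩ := hρ.exists_eq_mul_conjTranspose_self
  rw [show K * (B * Bᴴ) * Kᴴ = (K * B) * (K * B)ᴴ by simp [Matrix.mul_assoc],
    range_mulVecLin_mul_conjTranspose_self, range_mulVecLin_mul_conjTranspose_self,
    mulVecLin_mul, LinearMap.range_comp]

end Matrix

theorem Submodule.iterate_bot_le_iterate_finrank {K V : Type*} [DivisionRing K] [AddCommGroup V]
    [Module K V] [FiniteDimensional K V] {G : Submodule K V → Submodule K V} (hG : Monotone G)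
    (N : ℕ) : G^[N] ⊥ ≤ G^[Module.finrank K V] ⊥ := by
  have hmono : Monotone fun n => G^[n] ⊥ := Monotone.monotone_iterate_of_le_map hG bot_le
  obtain ⟨k, hk, hfix⟩ : ∃ k ≤ Module.finrank K V, G (G^[k] ⊥) = G^[k] ⊥ := by
    by_contra! hne
    have hgrow : ∀ n ≤ Module.finrank K V + 1, n ≤ Module.finrank K (G^[n] ⊥) := by
      intro n hn
      induction n with
      | zero => exact Nat.zero_le _
      | succ n ih =>
        have hlt : G^[n] ⊥ < G^[n + 1] ⊥ := by
          have hle : G^[n] ⊥ ≤ G^[n + 1] ⊥ := hmono n.le_succ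
          rw [Function.iterate_succ_apply'] at hle ⊢
          exact hle.lt_of_ne' (hne n (by omega))
        exact (ih (by omega)).trans_lt (Submodule.finrank_lt_finrank_of_lt hlt)
    have := (hgrow _ le_rfl).trans (Submodule.finrank_le _)
    omega
  have hstable : ∀ n ≥ k, G^[n] ⊥ = G^[k] ⊥ := fun n hn => by
    rw [← Nat.sub_add_cancel hn, Function.iterate_add_apply, Function.iterate_fixed hfix]
  rcases le_total N (Module.finrank K V) with hN | hN
  · exact hmono hN
  · rw [hstable N (hk.trans hN), hstable _ hk]

section Program

variable {d m n : ℕ} (E : Fin m → Fin n → Matrix (Fin d) (Fin d) ℂ)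
  (M₁ : Matrix (Fin d) (Fin d) ℂ)

noncomputable def progFSum (ρ : Matrix (Fin d) (Fin d) ℂ) : Matrix (Fin d) (Fin d) ℂ :=
  ∑ k, progF E M₁ k ρ

noncomputable def progFSupp (S : Submodule ℂ (Fin d → ℂ)) : Submodule ℂ (Fin d → ℂ) :=
  ⨆ k, ⨆ i, S.map (E k i * M₁).mulVecLin

theorem progFSupp_mono : Monotone (progFSupp E M₁) := fun _ _ h =>
  iSup_mono fun _ => iSup_mono fun _ => Submodule.map_mono h

theorem progF_eq_sum (k : Fin m) (ρ : Matrix (Fin d) (Fin d) ℂ) :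
    progF E M₁ k ρ = ∑ i, (E k i * M₁) * ρ * (E k i * M₁)ᴴ := by
  simp only [progF, conjTranspose_mul, Matrix.mul_assoc]

theorem progF_sum {ι : Type*} (k : Fin m) (s : Finset ι)
    (ρ : ι → Matrix (Fin d) (Fin d) ℂ) :
    progF E M₁ k (∑ j ∈ s, ρ j) = ∑ j ∈ s, progF E M₁ k (ρ j) := by
  simp only [progF, Matrix.mul_sum, Matrix.sum_mul]
  exact Finset.sum_comm

theorem progFSum_sum {ι : Type*} (s : Finset ι) (ρ : ι → Matrix (Fin d) (Fin d) ℂ) :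
    progFSum E M₁ (∑ j ∈ s, ρ j) = ∑ j ∈ s, progFSum E M₁ (ρ j) := by
  simp only [progFSum, progF_sum]
  exact Finset.sum_comm

theorem progFStr_sum {ι : Type*} (f : List (Fin m)) (s : Finset ι)
    (ρ : ι → Matrix (Fin d) (Fin d) ℂ) :
    progFStr E M₁ f (∑ j ∈ s, ρ j) = ∑ j ∈ s, progFStr E M₁ f (ρ j) := by
  induction f generalizing ρ with
  | nil => rfl
  | cons k f ih => exact (congrArg (progFStr E M₁ f) (progF_sum E M₁ k s ρ)).trans (ih _)

theorem iterate_progFSum_eq_sum_progFStr (i : ℕ) (ρ : Matrix (Fin d) (Fin d) ℂ) :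
    (progFSum E M₁)^[i] ρ = ∑ g : Fin i → Fin m, progFStr E M₁ (List.ofFn g) ρ := by
  induction i generalizing ρ with
  | zero => simp [progFStr]
  | succ i ih =>
    rw [Function.iterate_succ_apply, ih, progFSum]
    simp only [progFStr_sum]
    rw [Finset.sum_comm, ← Fintype.sum_prod_type']
    refine Fintype.sum_equiv (Fin.consEquiv fun _ => Fin m) _ _ fun p => ?_
    simp [List.ofFn_succ, Fin.consEquiv, progFStr]

theorem sum_range_succ_iterate_progFSum (ρ₀ : Matrix (Fin d) (Fin d) ℂ) (N : ℕ) :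
    ∑ i ∈ Finset.range (N + 1), (progFSum E M₁)^[i] ρ₀
      = ρ₀ + progFSum E M₁ (∑ i ∈ Finset.range N, (progFSum E M₁)^[i] ρ₀) := by
  rw [Finset.sum_range_succ', add_comm, progFSum_sum]
  simp only [Function.iterate_succ_apply', Function.iterate_zero_apply]

theorem posSemidef_progF {ρ : Matrix (Fin d) (Fin d) ℂ} (hρ : ρ.PosSemidef) (k : Fin m) :
    (progF E M₁ k ρ).PosSemidef := by
  rw [progF_eq_sum]
  exact posSemidef_sum _ fun i _ => hρ.mul_mul_conjTranspose_same _

theorem posSemidef_progFSum {ρ : Matrix (Fin d) (Fin d) ℂ} (hρ : ρ.PosSemidef) :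
    (progFSum E M₁ ρ).PosSemidef :=
  posSemidef_sum _ fun k _ => posSemidef_progF E M₁ hρ k

theorem posSemidef_progFStr {ρ : Matrix (Fin d) (Fin d) ℂ} (hρ : ρ.PosSemidef)
    (f : List (Fin m)) : (progFStr E M₁ f ρ).PosSemidef := by
  induction f generalizing ρ with
  | nil => exact hρ
  | cons k f ih => exact ih (posSemidef_progF E M₁ hρ k)

theorem posSemidef_iterate_progFSum {ρ : Matrix (Fin d) (Fin d) ℂ} (hρ : ρ.PosSemidef)
    (i : ℕ) :
    ((progFSum E M₁)^[i] ρ).PosSemidef := by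
  induction i with
  | zero => exact hρ
  | succ i ih => rw [Function.iterate_succ_apply']; exact posSemidef_progFSum E M₁ ih

theorem matSupp_add {ρ σ : Matrix (Fin d) (Fin d) ℂ} (hρ : ρ.PosSemidef)
    (hσ : σ.PosSemidef) :
    matSupp (ρ + σ) = matSupp ρ ⊔ matSupp σ :=
  hρ.range_mulVecLin_add hσ

theorem matSupp_sum {ι : Type*} (s : Finset ι) {ρ : ι → Matrix (Fin d) (Fin d) ℂ}
    (hρ : ∀ i ∈ s, (ρ i).PosSemidef) :
    matSupp (∑ i ∈ s, ρ i) = ⨆ i ∈ s, matSupp (ρ i) :=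
  PosSemidef.range_mulVecLin_sum s hρ

theorem matSupp_progF {ρ : Matrix (Fin d) (Fin d) ℂ} (hρ : ρ.PosSemidef) (k : Fin m) :
    matSupp (progF E M₁ k ρ) = ⨆ i, (matSupp ρ).map (E k i * M₁).mulVecLin := by
  rw [progF_eq_sum, matSupp_sum _ fun i _ => hρ.mul_mul_conjTranspose_same _]
  simp only [Finset.mem_univ, iSup_pos, matSupp, hρ.range_mulVecLin_mul_mul_conjTranspose]

theorem matSupp_progFSum {ρ : Matrix (Fin d) (Fin d) ℂ} (hρ : ρ.PosSemidef) :
    matSupp (progFSum E M₁ ρ) = progFSupp E M₁ (matSupp ρ) := by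
  rw [progFSum, matSupp_sum _ fun k _ => posSemidef_progF E M₁ hρ k]
  simp only [Finset.mem_univ, iSup_pos, matSupp_progF E M₁ hρ, progFSupp]

theorem iSup_matSupp_progFStr {ρ₀ : Matrix (Fin d) (Fin d) ℂ} (hρ₀ : ρ₀.PosSemidef) :
    ⨆ f : List (Fin m), matSupp (progFStr E M₁ f ρ₀)
      = ⨆ i, matSupp ((progFSum E M₁)^[i] ρ₀) := by
  rw [← List.equivSigmaTuple.symm.iSup_comp, iSup_sigma]
  refine iSup_congr fun i => ?_
  rw [iterate_progFSum_eq_sum_progFStr,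
    matSupp_sum _ fun g _ => posSemidef_progFStr E M₁ hρ₀ _]
  simp [List.equivSigmaTuple]

theorem matSupp_sum_range_iterate_progFSum {ρ₀ : Matrix (Fin d) (Fin d) ℂ}
    (hρ₀ : ρ₀.PosSemidef) (N : ℕ) :
    matSupp (∑ i ∈ Finset.range N, (progFSum E M₁)^[i] ρ₀)
      = (fun S => matSupp ρ₀ ⊔ progFSupp E M₁ S)^[N] ⊥ := by
  induction N with
  | zero => simp [matSupp]
  | succ N ih =>
    have hpsd := posSemidef_sum (Finset.range N) fun i _ =>
      posSemidef_iterate_progFSum E M₁ hρ₀ i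
    rw [sum_range_succ_iterate_progFSum, matSupp_add hρ₀ (posSemidef_progFSum E M₁ hpsd),
      matSupp_progFSum E M₁ hpsd, ih, Function.iterate_succ_apply']

theorem iSup_matSupp_iterate_progFSum {ρ₀ : Matrix (Fin d) (Fin d) ℂ}
    (hρ₀ : ρ₀.PosSemidef) :
    ⨆ i, matSupp ((progFSum E M₁)^[i] ρ₀)
      = matSupp (∑ i ∈ Finset.range d, (progFSum E M₁)^[i] ρ₀) := by
  have hpsd := posSemidef_iterate_progFSum E M₁ hρ₀
  refine le_antisymm (iSup_le fun i => ?_) ?_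
  · have hstable := Submodule.iterate_bot_le_iterate_finrank
      (fun _ _ h => sup_le_sup_left (progFSupp_mono E M₁ h) (matSupp ρ₀)) (i + 1)
    rw [Module.finrank_fin_fun, ← matSupp_sum_range_iterate_progFSum E M₁ hρ₀,
      ← matSupp_sum_range_iterate_progFSum E M₁ hρ₀, matSupp_sum _ fun j _ => hpsd j]
      at hstable
    exact le_trans (le_iSup₂_of_le i (Finset.self_mem_range_succ i) le_rfl) hstable
  · rw [matSupp_sum _ fun j _ => hpsd j]
    exact iSup₂_le fun i _ => le_iSup (fun i => matSupp ((progFSum E M₁)^[i] ρ₀)) i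

end Program

theorem reachable_space_eq_general {d m n : ℕ}
    (E : Fin m → Fin n → Matrix (Fin d) (Fin d) ℂ)
    (M₁ : Matrix (Fin d) (Fin d) ℂ)
    (ρ₀ : Matrix (Fin d) (Fin d) ℂ) (hρ₀ : ρ₀.PosSemidef) :
    (⨆ f : List (Fin m), matSupp (progFStr E M₁ f ρ₀))
      = matSupp (∑ i ∈ Finset.range d, (fun ρ => ∑ k, progF E M₁ k ρ)^[i] ρ₀) :=
  (iSup_matSupp_progFStr E M₁ hρ₀).trans (iSup_matSupp_iterate_progFSum E M₁ hρ₀)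

theorem reachable_space_eq {d m n : ℕ}
    (E : Fin m → Fin n → Matrix (Fin d) (Fin d) ℂ)
    (M₀ M₁ : Matrix (Fin d) (Fin d) ℂ)
    (hE : ∀ k, ∑ i, (E k i)ᴴ * E k i = 1)
    (hM : M₀ᴴ * M₀ + M₁ᴴ * M₁ = 1)
    (ρ₀ : Matrix (Fin d) (Fin d) ℂ) (hρ₀ : ρ₀.PosSemidef) (htr : ρ₀.trace ≤ 1) :
    (⨆ f : List (Fin m), matSupp (progFStr E M₁ f ρ₀))
      = matSupp (∑ i ∈ Finset.range d, (fun ρ => ∑ k, progF E M₁ k ρ)^[i] ρ₀) :=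
  reachable_space_eq_general E M₁ ρ₀ hρ₀
end

section
/- Let P = ({E_k : k ∈ K}, {M_0, M_1}) be a concurrent quantum program on ℂ^d with input a partial density operator ρ_0. Then P terminates in the biggest schedule S = K^ω if and only if it uniformly terminates in S; that is, (for every infinite path s : ℕ → K there exists n with F_{s[n]}(ρ_0) = 0) if and only if (there exists n such that F_{s[n]}(ρ_0) = 0 for every infinite path s). -/
open Matrix
open scoped ComplexOrder

/-- The length-`N` prefix `s[N] = s₁⋯s_N` of an infinite path `s`. -/
def prefixOf {m : ℕ} (s : ℕ → Fin m) (N : ℕ) : List (Fin m) :=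
  List.ofFn fun i : Fin N => s i

/-!
The path space `K^ω = ℕ → K` is compact (Tychonoff, `K` finite). Whether a path has terminated
after `N` steps depends only on its first `N` letters, so the paths terminating within `N` steps
form an open set; since every `F_k` maps `0` to `0`, these sets increase with `N`. Termination
on every path says that they cover `K^ω`, and an increasing open cover of a compact space is
eventually the whole space.
-/

theorem CompactSpace.exists_forall_mem_of_monotone_isOpen_cover {X ι : Type*}
    [TopologicalSpace X] [CompactSpace X] [Preorder ι] [IsDirected ι (· ≤ ·)] [Nonempty ι]
    {U : ι → Set X} (hU : ∀ i, IsOpen (U i)) (hmono : Monotone U) (hcover : ∀ x, ∃ i, x ∈ U i) :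
    ∃ i, ∀ x, x ∈ U i := by
  obtain ⟨i, hi⟩ := isCompact_univ.elim_directed_cover U hU
    (fun x _ => Set.mem_iUnion.2 (hcover x)) hmono.directed_le
  exact ⟨i, fun x => hi (Set.mem_univ x)⟩

lemma isOpen_setOf_prefixOf {m : ℕ} (Q : List (Fin m) → Prop) (N : ℕ) :
    IsOpen {s : ℕ → Fin m | Q (prefixOf s N)} := by
  have hrestrict : Continuous fun (s : ℕ → Fin m) (i : Fin N) => s i :=
    continuous_pi fun i => continuous_apply (i : ℕ)
  exact hrestrict.isOpen_preimage {g | Q (List.ofFn g)} (isOpen_discrete _)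

section Program

variable {d m n : ℕ} (E : Fin m → Fin n → Matrix (Fin d) (Fin d) ℂ)
  (M₁ : Matrix (Fin d) (Fin d) ℂ)

lemma progF_zero (k : Fin m) : progF E M₁ k 0 = 0 := by
  simp [progF]

lemma progFStr_zero : ∀ f : List (Fin m), progFStr E M₁ f 0 = 0
  | [] => rfl
  | k :: f => by rw [progFStr, progF_zero, progFStr_zero f]

lemma progFStr_append : ∀ (f g : List (Fin m)) (ρ : Matrix (Fin d) (Fin d) ℂ),
    progFStr E M₁ (f ++ g) ρ = progFStr E M₁ g (progFStr E M₁ f ρ)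
  | [], _, _ => rfl
  | k :: f, g, ρ => by rw [List.cons_append, progFStr, progFStr, progFStr_append f g]

lemma prefixOf_succ (s : ℕ → Fin m) (N : ℕ) : prefixOf s (N + 1) = prefixOf s N ++ [s N] := by
  rw [prefixOf, List.ofFn_succ', List.concat_eq_append]
  rfl

lemma monotone_setOf_progFStr_prefixOf_eq_zero (ρ : Matrix (Fin d) (Fin d) ℂ) :
    Monotone fun N => {s : ℕ → Fin m | progFStr E M₁ (prefixOf s N) ρ = 0} := by
  refine monotone_nat_of_le_succ fun N s (hs : progFStr E M₁ (prefixOf s N) ρ = 0) => ?_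
  change progFStr E M₁ (prefixOf s (N + 1)) ρ = 0
  rw [prefixOf_succ, progFStr_append, hs, progFStr_zero]

end Program

theorem terminates_iff_uniformly_terminates_general {d m n : ℕ}
    (E : Fin m → Fin n → Matrix (Fin d) (Fin d) ℂ)
    (M₁ : Matrix (Fin d) (Fin d) ℂ)
    (ρ₀ : Matrix (Fin d) (Fin d) ℂ) :
    (∀ s : ℕ → Fin m, ∃ N : ℕ, progFStr E M₁ (prefixOf s N) ρ₀ = 0)
      ↔ (∃ N : ℕ, ∀ s : ℕ → Fin m, progFStr E M₁ (prefixOf s N) ρ₀ = 0) :=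
  ⟨CompactSpace.exists_forall_mem_of_monotone_isOpen_cover
      (fun N => isOpen_setOf_prefixOf (fun f => progFStr E M₁ f ρ₀ = 0) N)
      (monotone_setOf_progFStr_prefixOf_eq_zero E M₁ ρ₀),
    fun ⟨N, hN⟩ s => ⟨N, hN s⟩⟩

theorem terminates_iff_uniformly_terminates {d m n : ℕ}
    (E : Fin m → Fin n → Matrix (Fin d) (Fin d) ℂ)
    (M₀ M₁ : Matrix (Fin d) (Fin d) ℂ)
    (hE : ∀ k, ∑ i, (E k i)ᴴ * E k i = 1)
    (hM : M₀ᴴ * M₀ + M₁ᴴ * M₁ = 1)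
    (ρ₀ : Matrix (Fin d) (Fin d) ℂ) (hρ₀ : ρ₀.PosSemidef) (htr : ρ₀.trace ≤ 1) :
    (∀ s : ℕ → Fin m, ∃ N : ℕ, progFStr E M₁ (prefixOf s N) ρ₀ = 0)
      ↔ (∃ N : ℕ, ∀ s : ℕ → Fin m, progFStr E M₁ (prefixOf s N) ρ₀ = 0) :=
  terminates_iff_uniformly_terminates_general E M₁ ρ₀
end
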